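/- arXiv:1601.02003 — 4 statements merged into one kernel-verified Lean document; each statement's English description precedes it below -/
import Mathlib

section
/- Let 0 < q < 1, let Π̃ be the infinite Mallows(q) process built from an i.i.d. Geometric(1-q) sequence (Z_i)_{i≥1}, and let Π_n be the induced permutation of {1,...,n}. Then Π_n is distributed according to the Mallows(q) measure on S_n: for every permutation π of {1,...,n}, P(Π_n = π) = q^{inv(π)}/Z_{n,q}. -/
open MeasureTheory

noncomputable section

/-- The infinite Mallows insertion process built from a sequence `z` of positive
integers (indexed from 1; the value at index 0 is junk): `insertProc z i` is the
`z i`-th smallest element of `{1,2,...} \ {insertProc z 1, ..., insertProc z (i-1)}`. -/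
noncomputable def insertProc (z : ℕ → ℕ) (i : ℕ) : ℕ :=
  if i = 0 then 0
  else Nat.nth (fun m => 1 ≤ m ∧ ∀ j, j < i → insertProc z j ≠ m) (z i - 1)
termination_by i

/-- Number of inversions of a permutation of `Fin n` (viewing `Fin n` as `{1,...,n}`). -/
def invCount {n : ℕ} (π : Equiv.Perm (Fin n)) : ℕ :=
  (Finset.univ.filter fun p : Fin n × Fin n => p.1 < p.2 ∧ π p.2 < π p.1).card

/-- The Mallows normalizing constant `Z_{n,q} = ∑_π q^{inv(π)}`. -/
def mallowsZ (n : ℕ) (q : ℝ) : ℝ := ∑ π : Equiv.Perm (Fin n), q ^ invCount π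

/-!
`Π_n` depends only on `Z_1, …, Z_n`, so `P(Π_n = π)` is the total weight `∏ₖ (1 - q) q ^ (v k - 1)`
of the vectors `v ∈ {1, 2, …}ⁿ` whose insertion process induces `π`. If `π i < π (i + 1)`, then
`(v i, v (i + 1)) ↦ (v (i + 1) + 1, v i)` is a bijection from these vectors onto those inducing
`π * swap i (i + 1)`: the ascent forces `v i ≤ v (i + 1)`, and then inserting `v (i + 1) + 1` and
`v i` takes the same two free values as inserting `v i` and `v (i + 1)`, in the opposite order.
The bijection multiplies the weight by `q` and adds one inversion, so induction on the number of
inversions gives `P(Π_n = π) = q ^ inv(π) P(Π_n = id)`, and summing over `π` gives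
`P(Π_n = id) = 1 / Z_{n,q}`.
-/

namespace Nat

variable {p : ℕ → Prop}

theorem count_and_ne_nth [DecidablePred p] (hp : (Set.ofPred p).Infinite) (s u : ℕ) :
    count (fun m => p m ∧ m ≠ nth p s) (nth p u) = u - if s < u then 1 else 0 := by
  classical
  simp only [count_eq_card_filter_range, ← nth_lt_nth hp (k := s)]
  have herase : (Finset.range (nth p u)).filter (fun m => p m ∧ m ≠ nth p s)
      = ((Finset.range (nth p u)).filter p).erase (nth p s) := by
    ext m
    simp only [Finset.mem_filter, Finset.mem_erase]
    tauto
  have hcard : ((Finset.range (nth p u)).filter p).card = u := by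
    rw [← count_eq_card_filter_range, count_nth_of_infinite hp]
  rw [herase]
  split_ifs with h
  · rw [Finset.card_erase_of_mem (by simp [h, nth_mem_of_infinite hp s]), hcard]
  · rw [Finset.erase_eq_of_notMem (by simp [h]), hcard, Nat.sub_zero]

theorem nth_and_ne_nth_of_lt (hp : (Set.ofPred p).Infinite) {s t : ℕ} (h : t < s) :
    nth (fun m => p m ∧ m ≠ nth p s) t = nth p t := by
  classical
  have hcount := count_and_ne_nth hp s t
  rw [if_neg h.not_gt, Nat.sub_zero] at hcount
  conv_lhs => rw [← hcount]
  exact nth_count ⟨nth_mem_of_infinite hp t, (nth_injective hp).ne h.ne⟩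

theorem nth_and_ne_nth_of_le (hp : (Set.ofPred p).Infinite) {s t : ℕ} (h : s ≤ t) :
    nth (fun m => p m ∧ m ≠ nth p s) t = nth p (t + 1) := by
  classical
  have hcount := count_and_ne_nth hp s (t + 1)
  rw [if_pos (Nat.lt_succ_of_le h), Nat.add_sub_cancel] at hcount
  conv_lhs => rw [← hcount]
  exact nth_count ⟨nth_mem_of_infinite hp _, (nth_injective hp).ne (by omega)⟩

end Nat

namespace Mallows

section Insertion

variable {z z' : ℕ → ℕ} {i : ℕ}

def Free (z : ℕ → ℕ) (i m : ℕ) : Prop := 1 ≤ m ∧ ∀ j < i, insertProc z j ≠ m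

theorem insertProc_zero (z : ℕ → ℕ) : insertProc z 0 = 0 := by
  rw [insertProc, if_pos rfl]

theorem insertProc_eq_nth (hi : i ≠ 0) : insertProc z i = Nat.nth (Free z i) (z i - 1) := by
  rw [insertProc, if_neg hi]
  rfl

theorem free_infinite (z : ℕ → ℕ) (i : ℕ) : (Set.ofPred (Free z i)).Infinite := by
  have hcompl : (Set.ofPred (Free z i))ᶜ ⊆ insert 0 (insertProc z '' Set.Iio i) := by
    intro m hm
    simp only [Set.mem_compl_iff, Set.mem_ofPred_eq, Free, not_and_or, not_forall, not_not,
      Nat.not_le, Nat.lt_one_iff] at hm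
    rcases hm with rfl | ⟨j, hj, rfl⟩
    exacts [Set.mem_insert _ _, Set.mem_insert_of_mem _ ⟨j, hj, rfl⟩]
  exact Set.infinite_of_finite_compl (((Set.finite_Iio i).image _).insert 0 |>.subset hcompl)

theorem free_succ (z : ℕ → ℕ) (i : ℕ) :
    Free z (i + 1) = fun m => Free z i m ∧ m ≠ insertProc z i := by
  ext m
  simp only [Free, Nat.lt_succ_iff_lt_or_eq, or_imp, forall_and, forall_eq, and_assoc, ne_comm]

theorem free_insertProc (hi : i ≠ 0) : Free z i (insertProc z i) := by
  rw [insertProc_eq_nth hi]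
  exact Nat.nth_mem_of_infinite (free_infinite z i) _

theorem insertProc_injective (z : ℕ → ℕ) : Function.Injective (insertProc z) := by
  have hlt : ∀ {j k}, j < k → insertProc z j ≠ insertProc z k := fun hjk =>
    (free_insertProc (Nat.ne_zero_of_lt hjk)).2 _ hjk
  intro j k h
  by_contra hne
  rcases Nat.lt_or_gt_of_ne hne with hjk | hkj
  exacts [hlt hjk h, hlt hkj h.symm]

theorem insertProc_congr (h : ∀ j ∈ Set.Icc 1 i, z j = z' j) :
    insertProc z i = insertProc z' i := by
  induction i using Nat.strong_induction_on with
  | _ i ih =>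
    rcases eq_or_ne i 0 with rfl | hi
    · rw [insertProc_zero, insertProc_zero]
    have hprev : ∀ j < i, insertProc z j = insertProc z' j := fun j hj =>
      ih j hj fun k hk => h k ⟨hk.1, hk.2.trans hj.le⟩
    have hfree : Free z i = Free z' i := by
      ext m
      simp only [Free]
      exact and_congr_right fun _ => forall₂_congr fun j hj => by rw [hprev j hj]
    rw [insertProc_eq_nth hi, insertProc_eq_nth hi, hfree,
      h i ⟨Nat.one_le_iff_ne_zero.2 hi, le_rfl⟩]

theorem insertProc_succ_eq_nth (hi : i ≠ 0) :
    insertProc z (i + 1) =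
      Nat.nth (fun m => Free z i m ∧ m ≠ Nat.nth (Free z i) (z i - 1)) (z (i + 1) - 1) := by
  rw [insertProc_eq_nth (Nat.succ_ne_zero i), free_succ, insertProc_eq_nth hi]

theorem insertProc_lt_insertProc_succ_iff (hi : i ≠ 0) (hz : 1 ≤ z (i + 1)) :
    insertProc z i < insertProc z (i + 1) ↔ z i ≤ z (i + 1) := by
  have hp := free_infinite z i
  rw [insertProc_succ_eq_nth hi, insertProc_eq_nth hi]
  rcases le_or_gt (z i) (z (i + 1)) with h | h
  · rw [Nat.nth_and_ne_nth_of_le hp (by omega), Nat.nth_lt_nth hp]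
    omega
  · rw [Nat.nth_and_ne_nth_of_lt hp (by omega), Nat.nth_lt_nth hp]
    omega

def swapSeq (z : ℕ → ℕ) (i : ℕ) : ℕ → ℕ :=
  Function.update (z ∘ Equiv.swap i (i + 1)) i (z (i + 1) + 1)

theorem swap_add_one_apply_lt {j k : ℕ} (hk : k ≠ i + 1) (hj : j < k) :
    Equiv.swap i (i + 1) j < k := by
  rw [Equiv.swap_apply_def]
  split_ifs <;> omega

theorem insertProc_swapSeq (hi : i ≠ 0) (hz : 1 ≤ z (i + 1)) (hle : z i ≤ z (i + 1)) :
    insertProc (swapSeq z i) = insertProc z ∘ Equiv.swap i (i + 1) := by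
  have hp := free_infinite z i
  have hnext : insertProc z (i + 1) = Nat.nth (Free z i) (z (i + 1)) := by
    rw [insertProc_succ_eq_nth hi, Nat.nth_and_ne_nth_of_le hp (by omega)]
    congr 1
    omega
  funext k
  induction k using Nat.strong_induction_on with
  | _ k ih =>
    have hfree : ∀ l ≤ k, l ≠ i + 1 → Free (swapSeq z i) l = Free z l := fun l hl hli => by
      ext m
      refine and_congr_right fun _ => ⟨fun h j hj => ?_, fun h j hj => ?_⟩
      · have := ih _ ((swap_add_one_apply_lt hli hj).trans_le hl)
        simpa [this] using h _ (swap_add_one_apply_lt hli hj)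
      · simpa [ih j (hj.trans_le hl)] using h _ (swap_add_one_apply_lt hli hj)
    rcases eq_or_ne k 0 with rfl | hk0
    · rw [Function.comp_apply, Equiv.swap_apply_of_ne_of_ne (by omega) (by omega),
        insertProc_zero, insertProc_zero]
    by_cases hki : k = i
    · subst k
      rw [insertProc_eq_nth hi, hfree i le_rfl (by omega), Function.comp_apply,
        Equiv.swap_apply_left, hnext, swapSeq, Function.update_self, Nat.add_sub_cancel]
    by_cases hki' : k = i + 1
    · subst k
      have hprev : insertProc (swapSeq z i) i = insertProc z (i + 1) := by
        rw [ih i (by omega), Function.comp_apply, Equiv.swap_apply_left]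
      have hval : swapSeq z i (i + 1) = z i := by
        rw [swapSeq, Function.update_of_ne (by omega), Function.comp_apply,
          Equiv.swap_apply_right]
      rw [insertProc_eq_nth hk0, free_succ, hfree i (by omega) (by omega), hprev, hnext, hval,
        Nat.nth_and_ne_nth_of_lt hp (by omega), Function.comp_apply, Equiv.swap_apply_right,
        insertProc_eq_nth hi]
    · rw [insertProc_eq_nth hk0, hfree k le_rfl hki', Function.comp_apply,
        Equiv.swap_apply_of_ne_of_ne hki hki', insertProc_eq_nth hk0, swapSeq,
        Function.update_of_ne hki, Function.comp_apply, Equiv.swap_apply_of_ne_of_ne hki hki']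

end Insertion

section Rank

variable {α β : Type*} [Fintype α] [LinearOrder β] (f : α → β)

open Finset in
def rank (i : α) : ℕ := #{k | f k ≤ f i}

variable {f}

theorem rank_le_rank {i k : α} (h : f i ≤ f k) : rank f i ≤ rank f k :=
  Finset.card_le_card fun _ hm => by
    simp only [Finset.mem_filter] at hm ⊢
    exact ⟨hm.1, hm.2.trans h⟩

theorem rank_lt_rank {i k : α} (h : f i < f k) : rank f i < rank f k :=
  Finset.card_lt_card ⟨fun _ hm => by
    simp only [Finset.mem_filter] at hm ⊢
    exact ⟨hm.1, hm.2.trans h.le⟩, fun hsub => by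
    simpa [h.not_ge] using hsub (Finset.mem_filter.2 ⟨Finset.mem_univ k, le_rfl⟩)⟩

theorem rank_lt_rank_iff {i k : α} : rank f i < rank f k ↔ f i < f k :=
  ⟨fun h => lt_of_not_ge fun h' => (rank_le_rank h').not_gt h, rank_lt_rank⟩

theorem rank_comp_equiv (e : α ≃ α) (i : α) : rank (f ∘ e) i = rank f (e i) :=
  Finset.card_equiv e fun k => by simp

theorem rank_injective (hf : Function.Injective f) : Function.Injective (rank f) := fun _ _ h =>
  hf (le_antisymm (not_lt.1 fun hlt => (rank_lt_rank hlt).ne' h)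
    (not_lt.1 fun hlt => (rank_lt_rank hlt).ne h))

theorem exists_perm_rank_eq {n : ℕ} {f : Fin n → β} (hf : Function.Injective f) :
    ∃ σ : Equiv.Perm (Fin n), ∀ i, rank f i = σ i + 1 := by
  have hpos : ∀ i, 1 ≤ rank f i := fun i =>
    Finset.card_pos.2 ⟨i, Finset.mem_filter.2 ⟨Finset.mem_univ i, le_rfl⟩⟩
  have hle : ∀ i, rank f i ≤ n := fun i =>
    (Finset.card_filter_le _ _).trans (Finset.card_univ.trans (Fintype.card_fin n)).le
  let g : Fin n → Fin n := fun i => ⟨rank f i - 1, by grind⟩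
  have hg : Function.Injective g := fun _ _ h =>
    rank_injective hf (by have := congrArg Fin.val h; grind)
  exact ⟨Equiv.ofBijective g (Finite.injective_iff_bijective.1 hg), fun i => by
    simp only [Equiv.ofBijective_apply, g]
    grind⟩

end Rank

section Inversions

variable {n : ℕ} {π : Equiv.Perm (Fin n)} {i j : Fin n}

theorem swap_lt_swap_iff_of_adjacent (hij : (i : ℕ) + 1 = j) {a b : Fin n}
    (hab : ¬(a = i ∧ b = j)) (hba : ¬(a = j ∧ b = i)) :
    Equiv.swap i j a < Equiv.swap i j b ↔ a < b := by
  simp only [Fin.lt_def, Equiv.swap_apply_def]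
  split_ifs <;> simp only [Fin.ext_iff] at * <;> omega

theorem invCount_mul_swap (hij : (i : ℕ) + 1 = j) (h : π i < π j) :
    invCount (π * Equiv.swap i j) = invCount π + 1 := by
  set τ := Equiv.swap i j
  have hlt : i < j := Fin.lt_def.2 (by omega)
  have hinv : (Finset.univ.filter fun p : Fin n × Fin n => p.1 < p.2 ∧ (π * τ) p.2 < (π * τ) p.1)
      = insert (i, j) ((Finset.univ.filter fun p : Fin n × Fin n => p.1 < p.2 ∧ π p.2 < π p.1).map
        (τ.prodCongr τ).toEmbedding) := by
    ext ⟨a, b⟩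
    simp only [Finset.mem_insert, Finset.mem_map_equiv, Finset.mem_filter, Finset.mem_univ,
      true_and]
    simp only [Prod.mk.injEq, Equiv.prodCongr_symm, Equiv.prodCongr_apply, τ, Equiv.symm_swap,
      Equiv.Perm.mul_apply, Prod.map]
    by_cases hab : a = i ∧ b = j
    · obtain ⟨rfl, rfl⟩ := hab
      simpa [hlt] using h
    by_cases hba : a = j ∧ b = i
    · obtain ⟨rfl, rfl⟩ := hba
      simp [h.not_gt, hlt.ne']
    · rw [swap_lt_swap_iff_of_adjacent hij hab hba]
      simp [hab]
  have hnotMem : (i, j) ∉ (Finset.univ.filter fun p : Fin n × Fin n =>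
      p.1 < p.2 ∧ π p.2 < π p.1).map (τ.prodCongr τ).toEmbedding := by
    simp [Finset.mem_map_equiv, τ, hlt.not_gt]
  rw [invCount, hinv, Finset.card_insert_of_notMem hnotMem, Finset.card_map, invCount]

theorem exists_adjacent_descent (hπ : π ≠ 1) : ∃ i j : Fin n, (i : ℕ) + 1 = j ∧ π j < π i := by
  by_contra! hasc
  refine hπ (Equiv.ext fun a => ?_)
  rcases n with _ | m
  · exact a.elim0
  have hmono : Monotone π := Fin.monotone_iff_le_succ.2 fun k => hasc _ _ (by simp)
  exact (hmono.strictMono_of_injective π.injective).apply_eq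

theorem invCount_eq_zero_iff : invCount π = 0 ↔ π = 1 := by
  refine ⟨fun h => by_contra fun hπ => ?_, fun h => ?_⟩
  · obtain ⟨i, j, hij, hdesc⟩ := exists_adjacent_descent hπ
    refine Finset.card_ne_zero.2 ⟨(i, j), ?_⟩ h
    exact Finset.mem_filter.2 ⟨Finset.mem_univ _, Fin.lt_def.2 (by dsimp only; omega), hdesc⟩
  · subst h
    rw [invCount, Finset.card_eq_zero, Finset.filter_eq_empty_iff]
    exact fun p _ hp => lt_asymm hp.1 hp.2

end Inversions

section Pattern

variable {n : ℕ} {z z' : ℕ → ℕ} {i j : Fin n}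

/-- `pattern z n i` is `Π_n (i + 1)`. -/
def pattern (z : ℕ → ℕ) (n : ℕ) : Fin n → ℕ := rank fun k : Fin n => insertProc z (k + 1)

theorem pattern_congr (h : ∀ k : Fin n, z (k + 1) = z' (k + 1)) : pattern z n = pattern z' n := by
  refine congrArg rank (funext fun k => insertProc_congr fun t ht => ?_)
  obtain ⟨s, rfl⟩ := Nat.exists_eq_add_of_le' ht.1
  exact h ⟨s, by have := ht.2; omega⟩

theorem exists_perm_pattern_eq (z : ℕ → ℕ) (n : ℕ) :
    ∃ σ : Equiv.Perm (Fin n), ∀ i, pattern z n i = σ i + 1 :=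
  exists_perm_rank_eq <| (insertProc_injective z).comp (Nat.succ_injective.comp Fin.val_injective)

theorem pattern_lt_pattern_iff_of_adjacent (hij : (i : ℕ) + 1 = j) (hz : 1 ≤ z (j + 1)) :
    pattern z n i < pattern z n j ↔ z (i + 1) ≤ z (j + 1) := by
  rw [pattern, rank_lt_rank_iff, ← hij]
  rw [← hij] at hz
  exact insertProc_lt_insertProc_succ_iff (Nat.add_one_ne_zero _) hz

theorem pattern_swapSeq (hij : (i : ℕ) + 1 = j) (hz : 1 ≤ z (j + 1)) (hle : z (i + 1) ≤ z (j + 1)) :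
    pattern (swapSeq z (i + 1)) n = pattern z n ∘ Equiv.swap i j := by
  have hj : (j : ℕ) + 1 = i + 1 + 1 := by omega
  have hsucc : Function.Injective fun k : Fin n => (k : ℕ) + 1 :=
    Nat.succ_injective.comp Fin.val_injective
  have hcomp : (fun k : Fin n => insertProc (swapSeq z (i + 1)) (k + 1))
      = (fun k : Fin n => insertProc z (k + 1)) ∘ Equiv.swap i j := by
    funext k
    rw [insertProc_swapSeq (Nat.add_one_ne_zero _) (hj ▸ hz) (hj ▸ hle), Function.comp_apply,
      ← hj, hsucc.swap_apply i j k]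
    rfl
  funext k
  rw [pattern, hcomp, rank_comp_equiv]
  rfl

end Pattern

section Vectors

variable {n : ℕ} {π : Equiv.Perm (Fin n)} {i j : Fin n} {v : Fin n → ℕ}

def toSeq (v : Fin n → ℕ) (t : ℕ) : ℕ := if h : t - 1 < n then v ⟨t - 1, h⟩ else 0

theorem toSeq_succ (v : Fin n → ℕ) (k : Fin n) : toSeq v (k + 1) = v k := by
  simp [toSeq]

def patternSet (π : Equiv.Perm (Fin n)) : Set (Fin n → ℕ) :=
  {v | (∀ k, 1 ≤ v k) ∧ ∀ k, pattern (toSeq v) n k = π k + 1}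

def swapVec (i j : Fin n) (v : Fin n → ℕ) : Fin n → ℕ :=
  Function.update (v ∘ Equiv.swap i j) i (v j + 1)

def unswapVec (i j : Fin n) (v : Fin n → ℕ) : Fin n → ℕ :=
  Function.update (v ∘ Equiv.swap i j) j (v i - 1)

theorem unswapVec_swapVec (hij : i ≠ j) (v : Fin n → ℕ) : unswapVec i j (swapVec i j v) = v := by
  funext k
  simp only [unswapVec, swapVec, Function.update_apply, Function.comp_apply,
    Equiv.swap_apply_def]
  split_ifs <;> simp_all

theorem swapVec_unswapVec (hij : i ≠ j) (hv : 1 ≤ v i) : swapVec i j (unswapVec i j v) = v := by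
  funext k
  simp only [unswapVec, swapVec, Function.update_apply, Function.comp_apply,
    Equiv.swap_apply_def]
  split_ifs <;> simp_all

theorem toSeq_swapVec (hij : (i : ℕ) + 1 = j) (v : Fin n → ℕ) (k : Fin n) :
    toSeq (swapVec i j v) (k + 1) = swapSeq (toSeq v) (i + 1) (k + 1) := by
  have hj : (j : ℕ) + 1 = i + 1 + 1 := by omega
  rw [toSeq_succ, swapVec, swapSeq]
  rcases eq_or_ne k i with rfl | hki
  · rw [Function.update_self, Function.update_self, ← hj, toSeq_succ]
  have hki' : (k : ℕ) + 1 ≠ i + 1 := by simpa [Fin.ext_iff] using hki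
  rw [Function.update_of_ne hki, Function.update_of_ne hki', Function.comp_apply,
    Function.comp_apply]
  rcases eq_or_ne k j with rfl | hkj
  · rw [Equiv.swap_apply_right, ← hj, Equiv.swap_apply_right, toSeq_succ]
  have hkj' : (k : ℕ) + 1 ≠ i + 1 + 1 := by simpa [← hj, Fin.ext_iff] using hkj
  rw [Equiv.swap_apply_of_ne_of_ne hki hkj, Equiv.swap_apply_of_ne_of_ne hki' hkj', toSeq_succ]

theorem pattern_toSeq_swapVec (hij : (i : ℕ) + 1 = j) (hv : 1 ≤ v j) (hle : v i ≤ v j) :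
    pattern (toSeq (swapVec i j v)) n = pattern (toSeq v) n ∘ Equiv.swap i j := by
  rw [pattern_congr (toSeq_swapVec hij v)]
  exact pattern_swapSeq hij (by rwa [toSeq_succ]) (by rwa [toSeq_succ, toSeq_succ])

theorem lt_iff_le_of_mem_patternSet (hij : (i : ℕ) + 1 = j) (hv : v ∈ patternSet π) :
    π i < π j ↔ v i ≤ v j := by
  have h := pattern_lt_pattern_iff_of_adjacent (z := toSeq v) hij (by rw [toSeq_succ]; exact hv.1 j)
  rw [hv.2, hv.2, toSeq_succ, toSeq_succ] at h
  rw [Fin.lt_def, ← h]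
  omega

theorem swapVec_mem_patternSet (hij : (i : ℕ) + 1 = j) (h : π i < π j) (hv : v ∈ patternSet π) :
    swapVec i j v ∈ patternSet (π * Equiv.swap i j) := by
  refine ⟨fun k => ?_, fun k => ?_⟩
  · rcases eq_or_ne k i with rfl | hk
    · simp [swapVec]
    · simpa [swapVec, Function.update_of_ne hk] using hv.1 _
  · rw [pattern_toSeq_swapVec hij (hv.1 j) ((lt_iff_le_of_mem_patternSet hij hv).1 h),
      Function.comp_apply, hv.2, Equiv.Perm.mul_apply]

theorem unswapVec_mem_patternSet (hij : (i : ℕ) + 1 = j) (h : π i < π j)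
    (hv : v ∈ patternSet (π * Equiv.swap i j)) : unswapVec i j v ∈ patternSet π := by
  have hne : i ≠ j := by rintro rfl; omega
  have hdesc : v j < v i := by
    have := (lt_iff_le_of_mem_patternSet hij hv).not
    simp only [Equiv.Perm.mul_apply, Equiv.swap_apply_left, Equiv.swap_apply_right, not_lt,
      not_le] at this
    exact this.1 h.le
  have hpos : ∀ k, 1 ≤ unswapVec i j v k := fun k => by
    simp only [unswapVec, Function.update_apply, Function.comp_apply]
    split_ifs
    · have := hv.1 j; omega
    · exact hv.1 _
  have hle : unswapVec i j v i ≤ unswapVec i j v j := by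
    rw [unswapVec, Function.update_of_ne hne, Function.update_self,
      Function.comp_apply, Equiv.swap_apply_left]
    omega
  refine ⟨hpos, fun k => ?_⟩
  have hpat := congrFun (pattern_toSeq_swapVec hij (hpos j) hle) (Equiv.swap i j k)
  rw [swapVec_unswapVec hne (by omega), hv.2, Function.comp_apply, Equiv.swap_apply_self,
    Equiv.Perm.mul_apply, Equiv.swap_apply_self] at hpat
  exact hpat.symm

def patternSetSwapEquiv (hij : (i : ℕ) + 1 = j) (h : π i < π j) :
    patternSet π ≃ patternSet (π * Equiv.swap i j) where
  toFun v := ⟨swapVec i j v, swapVec_mem_patternSet hij h v.2⟩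
  invFun v := ⟨unswapVec i j v, unswapVec_mem_patternSet hij h v.2⟩
  left_inv v := Subtype.ext (unswapVec_swapVec (i := i) (j := j) (by rintro rfl; omega) v)
  right_inv v := Subtype.ext (swapVec_unswapVec (i := i) (j := j) (by rintro rfl; omega)
    (v.2.1 i))

end Vectors

section Mass

variable {n : ℕ} {π : Equiv.Perm (Fin n)} {i j : Fin n} {q : ℝ}

def geomWeight (q : ℝ) (k : ℕ) : ENNReal := ENNReal.ofReal ((1 - q) * q ^ (k - 1))

def weight (q : ℝ) (v : Fin n → ℕ) : ENNReal := ∏ k, geomWeight q (v k)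

def mass (q : ℝ) (π : Equiv.Perm (Fin n)) : ENNReal := ∑' v : patternSet π, weight q (v : Fin n → ℕ)

theorem geomWeight_succ (hq : 0 ≤ q) {k : ℕ} (hk : 1 ≤ k) :
    geomWeight q (k + 1) = ENNReal.ofReal q * geomWeight q k := by
  rw [geomWeight, geomWeight, ← ENNReal.ofReal_mul hq, Nat.add_sub_cancel,
    ← Nat.sub_add_cancel hk, pow_succ, Nat.add_sub_cancel]
  ring_nf

theorem weight_swapVec (hq : 0 ≤ q) {v : Fin n → ℕ} (hv : 1 ≤ v j) :
    weight q (swapVec i j v) = ENNReal.ofReal q * weight q v := by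
  have hupdate : ∀ b, ∏ k, geomWeight q (Function.update (v ∘ Equiv.swap i j) i b k)
      = geomWeight q b * ∏ k ∈ Finset.univ \ {i}, geomWeight q (v (Equiv.swap i j k)) := by
    intro b
    simp_rw [← Function.comp_apply (f := geomWeight q), Function.comp_update]
    exact Finset.prod_update_of_mem (Finset.mem_univ i) _ _
  have hweight :
      weight q v = ∏ k, geomWeight q (Function.update (v ∘ Equiv.swap i j) i (v j) k) := by
    rw [weight, ← Equiv.prod_comp (Equiv.swap i j)]
    congr 1
    funext k
    rcases eq_or_ne k i with rfl | hk
    · simp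
    · simp [Function.update_of_ne hk]
  rw [weight, swapVec, hupdate, hweight, hupdate, geomWeight_succ hq hv, mul_assoc]

theorem mass_mul_swap (hq : 0 ≤ q) (hij : (i : ℕ) + 1 = j) (h : π i < π j) :
    mass q (π * Equiv.swap i j) = ENNReal.ofReal q * mass q π := by
  rw [mass, ← (patternSetSwapEquiv hij h).tsum_eq, mass, ← ENNReal.tsum_mul_left]
  exact tsum_congr fun v => weight_swapVec hq (v.2.1 j)

theorem mass_eq_pow_mul_mass_one (hq : 0 ≤ q) (π : Equiv.Perm (Fin n)) :
    mass q π = ENNReal.ofReal (q ^ invCount π) * mass q (1 : Equiv.Perm (Fin n)) := by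
  induction hN : invCount π generalizing π with
  | zero => rw [invCount_eq_zero_iff.1 hN, pow_zero, ENNReal.ofReal_one, one_mul]
  | succ N ih =>
    have hπ : π ≠ 1 := fun h => N.succ_ne_zero (hN.symm.trans (invCount_eq_zero_iff.2 h))
    obtain ⟨i, j, hij, hdesc⟩ := exists_adjacent_descent hπ
    set σ := π * Equiv.swap i j
    have hσ : σ * Equiv.swap i j = π := by simp [σ, mul_assoc]
    have hasc : σ i < σ j := by simpa [σ] using hdesc
    have hinv : invCount σ = N := by
      have := invCount_mul_swap hij hasc
      rw [hσ] at this
      omega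
    rw [← hσ, mass_mul_swap hq hij hasc, ih σ hinv, ← mul_assoc, ← ENNReal.ofReal_mul hq,
      pow_succ']

end Mass

section Probability

variable {Ω : Type*} {Z : ℕ → Ω → ℕ} {n : ℕ}

def initialVec (Z : ℕ → Ω → ℕ) (n : ℕ) (ω : Ω) : Fin n → ℕ := fun k => Z (k + 1) ω

theorem setOf_pattern_eq (Z : ℕ → Ω → ℕ) (σ : Equiv.Perm (Fin n)) :
    {ω | ∀ i, pattern (fun j => Z j ω) n i = σ i + 1}
      = initialVec Z n ⁻¹' {v | ∀ i, pattern (toSeq v) n i = σ i + 1} := by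
  ext ω
  simp only [Set.mem_ofPred_eq, Set.mem_preimage]
  rw [pattern_congr fun k => (toSeq_succ (initialVec Z n ω) k).symm]

variable [MeasurableSpace Ω] {P : Measure Ω}

theorem measurable_initialVec (hmeas : ∀ i, Measurable (Z i)) (n : ℕ) :
    Measurable (initialVec Z n) :=
  measurable_pi_lambda _ fun _ => hmeas _

theorem measure_initialVec_preimage_singleton {q : ℝ} (hindep : ProbabilityTheory.iIndepFun Z P)
    (hgeom : ∀ i k, 1 ≤ k → P {ω | Z i ω = k} = geomWeight q k)
    {v : Fin n → ℕ} (hv : ∀ k, 1 ≤ v k) : P (initialVec Z n ⁻¹' {v}) = weight q v := by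
  have hinter : initialVec Z n ⁻¹' {v} = ⋂ k : Fin n, Z (k + 1) ⁻¹' {v k} := by
    ext ω
    simp [initialVec, funext_iff]
  rw [hinter, (hindep.precomp (g := fun k : Fin n => (k : ℕ) + 1)
    (Nat.succ_injective.comp Fin.val_injective)).meas_iInter fun k => ⟨{v k}, trivial, rfl⟩]
  exact Finset.prod_congr rfl fun k _ => hgeom _ _ (hv k)

theorem measure_pattern_eq_mass {q : ℝ} (hmeas : ∀ i, Measurable (Z i))
    (hindep : ProbabilityTheory.iIndepFun Z P) (hpos : ∀ i ω, 1 ≤ Z i ω)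
    (hgeom : ∀ i k, 1 ≤ k → P {ω | Z i ω = k} = geomWeight q k) (σ : Equiv.Perm (Fin n)) :
    P {ω | ∀ i, pattern (fun j => Z j ω) n i = σ i + 1} = mass q σ := by
  have hset : {ω | ∀ i, pattern (fun j => Z j ω) n i = σ i + 1}
      = initialVec Z n ⁻¹' patternSet σ := by
    rw [setOf_pattern_eq]
    ext ω
    exact (and_iff_right fun k => hpos _ ω).symm
  rw [hset, ← tsum_measure_preimage_singleton (Set.to_countable _)
    fun v _ => measurable_initialVec hmeas n (measurableSet_singleton v)]
  exact tsum_congr fun v => measure_initialVec_preimage_singleton hindep hgeom v.2.1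

theorem sum_measure_pattern_eq_one [IsProbabilityMeasure P] (hmeas : ∀ i, Measurable (Z i))
    (n : ℕ) :
    ∑ σ : Equiv.Perm (Fin n), P {ω | ∀ i, pattern (fun j => Z j ω) n i = σ i + 1} = 1 := by
  let A : Equiv.Perm (Fin n) → Set (Fin n → ℕ) := fun σ =>
    {v | ∀ i, pattern (toSeq v) n i = σ i + 1}
  have hdisj : Pairwise (Function.onFun Disjoint fun σ => initialVec Z n ⁻¹' A σ) :=
    fun σ τ hστ => Set.disjoint_left.2 fun ω hσ hτ => hστ (Equiv.ext fun i => Fin.ext <| by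
      have := (hσ i).symm.trans (hτ i)
      omega)
  have hcover : ⋃ σ, A σ = Set.univ :=
    Set.iUnion_eq_univ_iff.2 fun v => exists_perm_pattern_eq (toSeq v) n
  calc ∑ σ : Equiv.Perm (Fin n), P {ω | ∀ i, pattern (fun j => Z j ω) n i = σ i + 1}
      = ∑ σ, P (initialVec Z n ⁻¹' A σ) :=
        Finset.sum_congr rfl fun σ _ => congrArg P (setOf_pattern_eq Z σ)
    _ = P (⋃ σ, initialVec Z n ⁻¹' A σ) := by
      rw [measure_iUnion hdisj fun σ =>
        measurable_initialVec hmeas n (Set.to_countable _).measurableSet, tsum_fintype]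
    _ = 1 := by rw [← Set.preimage_iUnion, hcover, Set.preimage_univ, measure_univ]

end Probability

end Mallows

theorem induced_perm_is_mallows_general
    {Ω : Type*} [MeasurableSpace Ω] (P : Measure Ω) [IsProbabilityMeasure P]
    (q : ℝ) (hq0 : 0 < q)
    (Z : ℕ → Ω → ℕ)
    (hmeas : ∀ i, Measurable (Z i))
    (hindep : ProbabilityTheory.iIndepFun Z P)
    (hpos : ∀ i ω, 1 ≤ Z i ω)
    (hgeom : ∀ i k, 1 ≤ k →
      P {ω | Z i ω = k} = ENNReal.ofReal ((1 - q) * q ^ (k - 1)))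
    (n : ℕ) (π : Equiv.Perm (Fin n)) :
    P {ω | ∀ i : Fin n,
        ((Finset.univ : Finset (Fin n)).filter
          (fun k : Fin n =>
            insertProc (fun j => Z j ω) ((k : ℕ) + 1)
              ≤ insertProc (fun j => Z j ω) ((i : ℕ) + 1))).card
          = (π i : ℕ) + 1}
      = ENNReal.ofReal (q ^ invCount π / mallowsZ n q) := by
  have hmass := Mallows.measure_pattern_eq_mass hmeas hindep hpos hgeom (n := n)
  have hnorm : Mallows.mass q (1 : Equiv.Perm (Fin n)) * ENNReal.ofReal (mallowsZ n q) = 1 := by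
    rw [← Mallows.sum_measure_pattern_eq_one (P := P) hmeas n, mallowsZ,
      ENNReal.ofReal_sum_of_nonneg fun σ _ => pow_nonneg hq0.le _, Finset.mul_sum]
    refine Finset.sum_congr rfl fun σ _ => ?_
    rw [hmass, Mallows.mass_eq_pow_mul_mass_one hq0.le σ, mul_comm]
  have hZ : 0 < mallowsZ n q :=
    Finset.sum_pos (fun σ _ => pow_pos hq0 _) Finset.univ_nonempty
  change P {ω | ∀ i, Mallows.pattern (fun j => Z j ω) n i = π i + 1} = _
  rw [hmass, Mallows.mass_eq_pow_mul_mass_one hq0.le, ENNReal.eq_inv_of_mul_eq_one_left hnorm,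
    ENNReal.ofReal_div_of_pos hZ, div_eq_mul_inv]

/-- **The permutation induced on `{1,...,n}` by the infinite Mallows(q) process is
Mallows(q) distributed.** Here `(Z_i)_{i ≥ 1}` are i.i.d. Geometric(1-q) random
variables, `Π̃ = insertProc (Z · ω)`, and the induced permutation is given by the
rank function `Π_n(i) = #{k ∈ {1,...,n} : Π̃(k) ≤ Π̃(i)}`; identifying `Fin n` with
`{1,...,n}` via `i ↦ i+1`, for every `π : Equiv.Perm (Fin n)` the probability that
the induced permutation equals `π` is `q^{inv(π)}/Z_{n,q}`. -/
theorem induced_perm_is_mallows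
    {Ω : Type*} [MeasurableSpace Ω] (P : Measure Ω) [IsProbabilityMeasure P]
    (q : ℝ) (hq0 : 0 < q) (hq1 : q < 1)
    (Z : ℕ → Ω → ℕ)
    (hmeas : ∀ i, Measurable (Z i))
    (hindep : ProbabilityTheory.iIndepFun Z P)
    (hpos : ∀ i ω, 1 ≤ Z i ω)
    (hgeom : ∀ i k, 1 ≤ k →
      P {ω | Z i ω = k} = ENNReal.ofReal ((1 - q) * q ^ (k - 1)))
    (n : ℕ) (π : Equiv.Perm (Fin n)) :
    P {ω | ∀ i : Fin n,
        ((Finset.univ : Finset (Fin n)).filter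
          (fun k : Fin n =>
            insertProc (fun j => Z j ω) ((k : ℕ) + 1)
              ≤ insertProc (fun j => Z j ω) ((i : ℕ) + 1))).card
          = (π i : ℕ) + 1}
      = ENNReal.ofReal (q ^ invCount π / mallowsZ n q) :=
  induced_perm_is_mallows_general P q hq0 Z hmeas hindep hpos hgeom n π

end
end

section
/- With the regenerative representation of the infinite Mallows(q) process, almost surely for every n ≥ 1: max_{1 ≤ i ≤ S_n - 1} Y_i^↓ ≤ L^↓(Π_n) ≤ max_{1 ≤ i ≤ S_n} Y_i^↓, where L^↓(Π_n) is the length of a longest decreasing subsequence of the induced permutation Π_n and Y_i^↓ is the length of a longest decreasing subsequence of Σ_i. -/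
/-!
Call `T` a regeneration point of `Π̃` when `Π̃` permutes `{1, ..., T}`. A descent `a < b`,
`Π̃ b < Π̃ a` never crosses a regeneration point, so a decreasing subsequence of `Π_n` (which is
order-isomorphic to `Π̃` on `{1, ..., n}`) lies in a single block `(T_{j-1}, T_j]` with `j ≤ S_n`,
while the blocks with `j < S_n` lie inside `{1, ..., n}`. This gives the sandwich once there are
infinitely many regeneration points. Almost surely there are: `Π̃ i ≤ Z_i - 1 + i`; by the first
Borel–Cantelli lemma `Z_i ≤ i` eventually, and by the second one, for infinitely many `k` all
`i ∈ (2^k, 2^(k+1)]` satisfy `Z_i ≤ 2^(k+1) + 1 - i` (these events are independent with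
probability bounded below). For such large `k`, `2^(k+1)` is a regeneration point.
-/

open MeasureTheory

noncomputable section

/-- The regeneration times of `g : ℕ → ℕ`: `regenT g 0 = 0` and `regenT g (i+1)` is the
least `j > regenT g i` such that `g` maps `{regenT g i + 1, ..., j}` onto itself. -/
noncomputable def regenT (g : ℕ → ℕ) : ℕ → ℕ
  | 0 => 0
  | i + 1 => sInf {j | regenT g i < j ∧
      (Finset.Icc (regenT g i + 1) j).image g = Finset.Icc (regenT g i + 1) j}

/-- Length of a longest decreasing subsequence of `g` along indices from `s`:
the largest `k` admitting `i_1 < ⋯ < i_k` in `s` with `g i_1 > ⋯ > g i_k`. -/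
noncomputable def ldsOn (g : ℕ → ℕ) (s : Finset ℕ) : ℕ :=
  sSup {k | ∃ f : Fin k → ℕ, StrictMono f ∧ (∀ j, f j ∈ s) ∧ StrictAnti (g ∘ f)}

/-- `L^↓(Π_n)`: the length of a longest decreasing subsequence of the permutation of
`{1,...,n}` induced by the insertion process, `Π_n(i) = #{k ∈ {1,...,n} : Π̃(k) ≤ Π̃(i)}`. -/
noncomputable def mallowsLnDown (z : ℕ → ℕ) (n : ℕ) : ℕ :=
  ldsOn (fun i => ((Finset.Icc 1 n).filter
      (fun k => insertProc z k ≤ insertProc z i)).card)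
    (Finset.Icc 1 n)

/-- `Y_i^↓`: the length of a longest decreasing subsequence of the block permutation
`Σ_i(j) = Π̃(T_{i-1} + j) - T_{i-1}` of `{1, ..., T_i - T_{i-1}}`. -/
noncomputable def blockYDown (z : ℕ → ℕ) (j : ℕ) : ℕ :=
  ldsOn
    (fun i => insertProc z (regenT (insertProc z) (j - 1) + i)
      - regenT (insertProc z) (j - 1))
    (Finset.Icc 1 (regenT (insertProc z) j - regenT (insertProc z) (j - 1)))

/-- `S_n = min {j : T_j ≥ n}`. -/
noncomputable def Sn (z : ℕ → ℕ) (n : ℕ) : ℕ :=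
  sInf {j | n ≤ regenT (insertProc z) j}

open Finset

lemma Nat.nth_le_add_card_of_setOf_not_subset {p : ℕ → Prop} {s : Finset ℕ}
    (hs : {m | ¬ p m} ⊆ s) (n : ℕ) : Nat.nth p n ≤ n + #s := by
  classical
  refine Nat.lt_succ_iff.1 (Nat.nth_lt_of_lt_count (n := n + #s + 1) ?_)
  rw [Nat.count_eq_card_filter_range]
  calc n < #(range (n + #s + 1)) - #s := by rw [card_range]; omega
    _ ≤ #(range (n + #s + 1) \ s) := le_card_sdiff _ _
    _ ≤ _ := card_le_card fun m hm => by
      rw [mem_sdiff] at hm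
      exact mem_filter.2 ⟨hm.1, by_contra fun h => hm.2 (hs h)⟩

section InsertProc

variable {z : ℕ → ℕ} {i : ℕ}

lemma insertProc_zero (z : ℕ → ℕ) : insertProc z 0 = 0 := by
  rw [insertProc, if_pos rfl]

lemma insertProc_of_ne_zero (hi : i ≠ 0) :
    insertProc z i = Nat.nth (fun m => 1 ≤ m ∧ ∀ j, j < i → insertProc z j ≠ m) (z i - 1) := by
  rw [insertProc, if_neg hi]

-- `0` is accounted for by the junk value `insertProc z 0 = 0`.
lemma setOf_not_avail_subset (hi : i ≠ 0) :
    {m | ¬ (1 ≤ m ∧ ∀ j, j < i → insertProc z j ≠ m)} ⊆ (range i).image (insertProc z) := by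
  intro m hm
  simp only [Set.mem_ofPred_eq, not_and_or, not_le, Nat.lt_one_iff, not_forall, not_not] at hm
  simp only [coe_image, coe_range, Set.mem_image, Set.mem_Iio]
  rcases hm with rfl | ⟨j, hj, rfl⟩
  exacts [⟨0, Nat.pos_of_ne_zero hi, insertProc_zero z⟩, ⟨j, hj, rfl⟩]

lemma insertProc_spec (hi : i ≠ 0) :
    1 ≤ insertProc z i ∧ ∀ j, j < i → insertProc z j ≠ insertProc z i := by
  rw [insertProc_of_ne_zero hi]
  refine Nat.nth_mem_of_infinite (p := fun m => 1 ≤ m ∧ ∀ j, j < i → insertProc z j ≠ m) ?_ _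
  have := (((range i).image (insertProc z)).finite_toSet.subset
    (setOf_not_avail_subset hi)).infinite_compl
  simpa only [Set.compl_ofPred, not_not] using this

lemma insertProc_le (z : ℕ → ℕ) (i : ℕ) : insertProc z i ≤ z i - 1 + i := by
  rcases eq_or_ne i 0 with rfl | hi
  · simp [insertProc_zero]
  rw [insertProc_of_ne_zero hi]
  refine (Nat.nth_le_add_card_of_setOf_not_subset (setOf_not_avail_subset hi) _).trans ?_
  grw [card_image_le, card_range]

lemma mapsTo_insertProc (z : ℕ → ℕ) : Set.MapsTo (insertProc z) (Set.Ici 1) (Set.Ici 1) :=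
  fun _ hi => (insertProc_spec (Nat.one_le_iff_ne_zero.1 hi)).1

lemma injOn_insertProc (z : ℕ → ℕ) : Set.InjOn (insertProc z) (Set.Ici 1) := by
  intro i hi j hj hij
  by_contra hne
  rcases Nat.lt_or_gt_of_ne hne with h | h
  · exact (insertProc_spec (Nat.one_le_iff_ne_zero.1 hj)).2 i h hij
  · exact (insertProc_spec (Nat.one_le_iff_ne_zero.1 hi)).2 j h hij.symm

end InsertProc

lemma Finset.image_eq_self_of_subset {α : Type*} [DecidableEq α] {g : α → α} {s : Finset α}
    (hinj : Set.InjOn g s) (h : s.image g ⊆ s) : s.image g = s :=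
  eq_of_subset_of_card_le h (card_image_of_injOn hinj).ge

def IsRegenPoint (g : ℕ → ℕ) (T : ℕ) : Prop :=
  (Icc 1 T).image g = Icc 1 T

section RegenPoint

variable {g : ℕ → ℕ} {T T' a b : ℕ}

lemma isRegenPoint_zero (g : ℕ → ℕ) : IsRegenPoint g 0 := by
  simp [IsRegenPoint]

lemma IsRegenPoint.apply_le (hT : IsRegenPoint g T) (ha : a ∈ Icc 1 T) : g a ≤ T := by
  have := mem_image_of_mem g ha
  rw [hT, mem_Icc] at this
  exact this.2

lemma IsRegenPoint.of_image_Icc (hT : IsRegenPoint g T) (hTT' : T ≤ T')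
    (hblock : (Icc (T + 1) T').image g = Icc (T + 1) T') : IsRegenPoint g T' := by
  have hsplit : Icc 1 T' = Icc 1 T ∪ Icc (T + 1) T' := by
    ext x; simp only [mem_Icc, mem_union]; omega
  rw [IsRegenPoint, hsplit, image_union, hT, hblock]

variable (hmaps : Set.MapsTo g (Set.Ici 1) (Set.Ici 1)) (hinj : Set.InjOn g (Set.Ici 1))
include hmaps hinj

lemma IsRegenPoint.lt_apply (hT : IsRegenPoint g T) (hb : T < b) : T < g b := by
  by_contra! h
  have hgb : g b ∈ (Icc 1 T).image g := by
    rw [hT, mem_Icc]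
    exact ⟨hmaps (Set.mem_Ici.2 (by omega : 1 ≤ b)), h⟩
  obtain ⟨a, ha, hab⟩ := mem_image.1 hgb
  have := hinj (mem_Icc.1 ha).1 (Set.mem_Ici.2 (by omega : 1 ≤ b)) hab
  have := (mem_Icc.1 ha).2
  omega

lemma IsRegenPoint.le_of_apply_le (hT : IsRegenPoint g T) (ha : a ∈ Icc 1 T)
    (hba : g b ≤ g a) : b ≤ T := by
  by_contra! h
  have := hT.lt_apply hmaps hinj h
  have := hT.apply_le ha
  omega

lemma isRegenPoint_of_forall_le (h : ∀ i ∈ Icc 1 T, g i ≤ T) : IsRegenPoint g T :=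
  image_eq_self_of_subset (hinj.mono fun _ hx => (mem_Icc.1 hx).1) <| image_subset_iff.2
    fun i hi => mem_Icc.2 ⟨hmaps (Set.mem_Ici.2 (mem_Icc.1 hi).1), h i hi⟩

lemma IsRegenPoint.image_Icc (hT : IsRegenPoint g T) (hT' : IsRegenPoint g T') :
    (Icc (T + 1) T').image g = Icc (T + 1) T' :=
  image_eq_self_of_subset
    (hinj.mono fun _ hx => Set.mem_Ici.2 (by have := (mem_Icc.1 hx).1; omega)) <|
    image_subset_iff.2 fun i hi => by
      rw [mem_Icc] at hi ⊢
      exact ⟨hT.lt_apply hmaps hinj (by omega), hT'.apply_le (mem_Icc.2 ⟨by omega, hi.2⟩)⟩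

variable (hR : {T | IsRegenPoint g T}.Infinite)
include hR

lemma IsRegenPoint.regenT_succ {i : ℕ} (hT : IsRegenPoint g (regenT g i)) :
    regenT g i < regenT g (i + 1) ∧ IsRegenPoint g (regenT g (i + 1)) := by
  obtain ⟨T', hT'R, hlt⟩ := hR.exists_gt (regenT g i)
  have hmem := Nat.sInf_mem (s := {j | regenT g i < j ∧
      (Icc (regenT g i + 1) j).image g = Icc (regenT g i + 1) j})
    ⟨T', hlt, hT.image_Icc hmaps hinj hT'R⟩
  rw [regenT]
  exact ⟨hmem.1, hT.of_image_Icc hmem.1.le hmem.2⟩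

lemma isRegenPoint_regenT (i : ℕ) : IsRegenPoint g (regenT g i) := by
  induction i with
  | zero => exact isRegenPoint_zero g
  | succ i ih => exact (ih.regenT_succ hmaps hinj hR).2

lemma regenT_strictMono : StrictMono (regenT g) :=
  strictMono_nat_of_lt_succ fun i =>
    ((isRegenPoint_regenT hmaps hinj hR i).regenT_succ hmaps hinj hR).1

end RegenPoint

section Lds

variable {g h : ℕ → ℕ} {s t : Finset ℕ} {k m : ℕ}

lemma ldsOn_bddAbove (g : ℕ → ℕ) (s : Finset ℕ) :
    BddAbove {k | ∃ f : Fin k → ℕ, StrictMono f ∧ (∀ j, f j ∈ s) ∧ StrictAnti (g ∘ f)} := by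
  refine ⟨#s, fun k ⟨f, hf, hfs, _⟩ => ?_⟩
  simpa using card_le_card_of_injOn (s := univ) f (fun j _ => hfs j) hf.injective.injOn

lemma le_ldsOn (f : Fin k → ℕ) (hf : StrictMono f) (hfs : ∀ j, f j ∈ s)
    (hg : StrictAnti (g ∘ f)) : k ≤ ldsOn g s :=
  le_csSup (ldsOn_bddAbove g s) ⟨f, hf, hfs, hg⟩

lemma ldsOn_le (h : ∀ k (f : Fin k → ℕ), StrictMono f → (∀ j, f j ∈ s) →
    StrictAnti (g ∘ f) → k ≤ m) : ldsOn g s ≤ m :=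
  csSup_le ⟨0, Fin.elim0, fun a => a.elim0, fun a => a.elim0, fun a => a.elim0⟩
    fun k ⟨f, hf, hfs, hg⟩ => h k f hf hfs hg

lemma ldsOn_mono (hst : s ⊆ t) : ldsOn g s ≤ ldsOn g t :=
  ldsOn_le fun _ f hf hfs hg => le_ldsOn f hf (fun j => hst (hfs j)) hg

lemma ldsOn_congr (hgh : ∀ a ∈ s, ∀ b ∈ s, g a < g b ↔ h a < h b) : ldsOn g s = ldsOn h s :=
  le_antisymm
    (ldsOn_le fun _ f hf hfs hg => le_ldsOn f hf hfs fun _ _ hab =>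
      (hgh _ (hfs _) _ (hfs _)).1 (hg hab))
    (ldsOn_le fun _ f hf hfs hh => le_ldsOn f hf hfs fun _ _ hab =>
      (hgh _ (hfs _) _ (hfs _)).2 (hh hab))

lemma ldsOn_comp_of_strictMono {e : ℕ → ℕ} (he : StrictMono e) :
    ldsOn (g ∘ e) s = ldsOn g (s.image e) := by
  refine le_antisymm (ldsOn_le fun _ f hf hfs hg => le_ldsOn (e ∘ f) (he.comp hf)
    (fun j => mem_image_of_mem e (hfs j)) hg) (ldsOn_le fun _ f hf hfs hg => ?_)
  choose f' hf's hf'e using fun j => mem_image.1 (hfs j)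
  obtain rfl : f = e ∘ f' := funext fun j => (hf'e j).symm
  exact le_ldsOn f' (fun _ _ hab => he.lt_iff_lt.1 (hf hab)) hf's hg

lemma ldsOn_sub_const (hT : ∀ i ∈ s, m ≤ g i) : ldsOn (fun i => g i - m) s = ldsOn g s :=
  ldsOn_congr fun a ha _ _ => tsub_lt_tsub_iff_right (hT a ha)

lemma ldsOn_rank (g : ℕ → ℕ) (s : Finset ℕ) :
    ldsOn (fun i => (s.filter fun k => g k ≤ g i).card) s = ldsOn g s := by
  set r : ℕ → ℕ := fun v => (s.filter fun k => g k ≤ v).card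
  have hr : Monotone r := fun v w hvw =>
    card_le_card (monotone_filter_right s fun _ _ hk => hk.trans hvw)
  refine (ldsOn_congr fun a ha b hb => ⟨fun hab => ?_, fun hab => ?_⟩).symm
  · refine card_lt_card ⟨monotone_filter_right s fun _ _ hk => hk.trans hab.le, fun hsub => ?_⟩
    have := (mem_filter.1 (hsub (mem_filter.2 ⟨hb, le_rfl⟩))).2
    omega
  · by_contra! hba
    exact (hr hba).not_gt hab

end Lds

lemma Nat.sInf_setOf_le_apply_eq {T : ℕ → ℕ} (hT : Monotone T) {x m : ℕ} (hlt : T m < x)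
    (hle : x ≤ T (m + 1)) : sInf {j | x ≤ T j} = m + 1 :=
  le_antisymm (Nat.sInf_le hle) <| le_csInf ⟨_, hle⟩ fun j hj => by
    by_contra! hjm
    exact (hT (Nat.lt_succ_iff.1 hjm)).not_gt (hlt.trans_le hj)

def regenBlock (g : ℕ → ℕ) (j : ℕ) : Finset ℕ :=
  Icc (regenT g (j - 1) + 1) (regenT g j)

section Sandwich

variable {g : ℕ → ℕ} (hmaps : Set.MapsTo g (Set.Ici 1) (Set.Ici 1))
  (hinj : Set.InjOn g (Set.Ici 1)) (hR : {T | IsRegenPoint g T}.Infinite)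
include hmaps hinj hR

lemma exists_regenT_lt_le {x : ℕ} (hx : 1 ≤ x) : ∃ m, regenT g m < x ∧ x ≤ regenT g (m + 1) :=
  (regenT_strictMono hmaps hinj hR).exists_between_of_tendsto_atTop
    (regenT_strictMono hmaps hinj hR).tendsto_atTop (by rw [regenT]; omega)

lemma sup_ldsOn_regenBlock_le (n : ℕ) :
    (Icc 1 (sInf {j | n ≤ regenT g j} - 1)).sup (fun j => ldsOn g (regenBlock g j))
      ≤ ldsOn g (Icc 1 n) := by
  rcases Nat.eq_zero_or_pos n with rfl | hn
  · simp
  obtain ⟨N, hN, hnN⟩ := exists_regenT_lt_le hmaps hinj hR hn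
  rw [Nat.sInf_setOf_le_apply_eq (regenT_strictMono hmaps hinj hR).monotone hN hnN,
    Nat.add_sub_cancel]
  refine Finset.sup_le fun j hj => ldsOn_mono fun i hi => ?_
  have := (regenT_strictMono hmaps hinj hR).monotone (mem_Icc.1 hj).2
  rw [regenBlock, mem_Icc] at hi
  exact mem_Icc.2 ⟨by omega, by omega⟩

/-- A decreasing subsequence stays in the block of its first entry, since regeneration points
cannot be crossed by descents. -/
lemma ldsOn_le_sup_ldsOn_regenBlock (n : ℕ) :
    ldsOn g (Icc 1 n)
      ≤ (Icc 1 (sInf {j | n ≤ regenT g j})).sup (fun j => ldsOn g (regenBlock g j)) := by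
  refine ldsOn_le fun k f hf hfs hg => ?_
  rcases k with _ | k
  · exact Nat.zero_le _
  have hf0 := mem_Icc.1 (hfs 0)
  obtain ⟨M, hM, hfM⟩ := exists_regenT_lt_le hmaps hinj hR hf0.1
  obtain ⟨N, hN, hnN⟩ := exists_regenT_lt_le hmaps hinj hR (hf0.1.trans hf0.2)
  have hMN : M < N + 1 :=
    (regenT_strictMono hmaps hinj hR).lt_iff_lt.1 (hM.trans_le (hf0.2.trans hnN))
  have hblock : ∀ j, f j ∈ regenBlock g (M + 1) := fun j => by
    have hfj := hf.monotone (Fin.zero_le j)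
    have := (isRegenPoint_regenT hmaps hinj hR (M + 1)).le_of_apply_le hmaps hinj
      (mem_Icc.2 ⟨hf0.1, hfM⟩) (hg.antitone (Fin.zero_le j))
    rw [regenBlock, mem_Icc, Nat.add_sub_cancel]
    omega
  rw [Nat.sInf_setOf_le_apply_eq (regenT_strictMono hmaps hinj hR).monotone hN hnN]
  exact (le_ldsOn f hf hblock hg).trans
    (le_sup (f := fun j => ldsOn g (regenBlock g j)) (mem_Icc.2 ⟨by omega, by omega⟩))

end Sandwich

section Mallows

variable {z : ℕ → ℕ}

lemma mallowsLnDown_eq (z : ℕ → ℕ) (n : ℕ) :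
    mallowsLnDown z n = ldsOn (insertProc z) (Icc 1 n) :=
  ldsOn_rank _ _

lemma blockYDown_eq (hR : {T | IsRegenPoint (insertProc z) T}.Infinite) (j : ℕ) :
    blockYDown z j = ldsOn (insertProc z) (regenBlock (insertProc z) j) := by
  set T := regenT (insertProc z) (j - 1)
  have hTT' : T ≤ regenT (insertProc z) j :=
    (regenT_strictMono (mapsTo_insertProc z) (injOn_insertProc z) hR).monotone (Nat.sub_le j 1)
  have hT := isRegenPoint_regenT (mapsTo_insertProc z) (injOn_insertProc z) hR (j - 1)
  rw [blockYDown, ldsOn_sub_const fun i hi => (hT.lt_apply (mapsTo_insertProc z)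
      (injOn_insertProc z) (by have := (mem_Icc.1 hi).1; omega)).le,
    show (fun i => insertProc z (T + i)) = insertProc z ∘ (T + ·) from rfl,
    ldsOn_comp_of_strictMono add_right_strictMono, image_add_left_Icc, Nat.add_sub_cancel' hTT',
    regenBlock]

theorem mallowsLnDown_sandwich (hR : {T | IsRegenPoint (insertProc z) T}.Infinite) (n : ℕ) :
    (Icc 1 (Sn z n - 1)).sup (blockYDown z) ≤ mallowsLnDown z n
      ∧ mallowsLnDown z n ≤ (Icc 1 (Sn z n)).sup (blockYDown z) := by
  have hblock : blockYDown z = fun j => ldsOn (insertProc z) (regenBlock (insertProc z) j) :=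
    funext (blockYDown_eq hR)
  rw [mallowsLnDown_eq, hblock, Sn]
  exact ⟨sup_ldsOn_regenBlock_le (mapsTo_insertProc z) (injOn_insertProc z) hR n,
    ldsOn_le_sup_ldsOn_regenBlock (mapsTo_insertProc z) (injOn_insertProc z) hR n⟩

lemma isRegenPoint_insertProc {T : ℕ} (h : ∀ i ∈ Icc 1 T, z i - 1 + i ≤ T) :
    IsRegenPoint (insertProc z) T :=
  isRegenPoint_of_forall_le (mapsTo_insertProc z) (injOn_insertProc z) fun i hi =>
    (insertProc_le z i).trans (h i hi)

/-- Eventually `z i ≤ i` keeps the values of the first half of `{1, ..., 2^(k+1)}` inside it;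
the dyadic condition does the same for the second half. -/
lemma infinite_setOf_isRegenPoint_insertProc (hev : ∀ᶠ i in Filter.atTop, z i ≤ i)
    (hfreq : ∃ᶠ k in Filter.atTop, ∀ i ∈ Ioc (2 ^ k) (2 ^ (k + 1)), z i ≤ 2 ^ (k + 1) + 1 - i) :
    {T | IsRegenPoint (insertProc z) T}.Infinite := by
  obtain ⟨m, hm⟩ := Filter.eventually_atTop.1 hev
  set C := (range m).sup fun i => z i + i
  refine Set.infinite_of_forall_exists_gt fun a => ?_
  obtain ⟨k, hk, hblock⟩ := Filter.frequently_atTop.1 hfreq (a + m + C)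
  have hpow : k < 2 ^ k := Nat.lt_two_pow_self
  have hpow' : 2 ^ (k + 1) = 2 ^ k + 2 ^ k := by ring
  refine ⟨2 ^ (k + 1), isRegenPoint_insertProc fun i hi => ?_, by omega⟩
  rw [mem_Icc] at hi
  rcases lt_or_ge i m with him | him
  · have : z i + i ≤ C := le_sup (f := fun i => z i + i) (mem_range.2 him)
    omega
  rcases le_or_gt i (2 ^ k) with hik | hik
  · have := hm i him
    omega
  · have := hblock i (mem_Ioc.2 ⟨hik, hi.2⟩)
    omega

end Mallows

lemma Real.exp_neg_div_le_one_sub {x q : ℝ} (hx : 0 ≤ x) (hxq : x ≤ q) (hq : q < 1) :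
    Real.exp (-(x / (1 - q))) ≤ 1 - x := by
  have hlog := Real.one_sub_inv_le_log_of_pos (x := 1 - x) (by linarith)
  have hdiv : x / (1 - x) ≤ x / (1 - q) := div_le_div_of_nonneg_left hx (by linarith) (by linarith)
  have hinv : 1 - (1 - x)⁻¹ = -(x / (1 - x)) := by
    have : 1 - x ≠ 0 := by linarith
    field_simp
    ring
  calc Real.exp (-(x / (1 - q))) ≤ Real.exp (Real.log (1 - x)) := Real.exp_le_exp.2 (by linarith)
    _ = 1 - x := Real.exp_log (by linarith)

lemma Real.exp_neg_le_prod_one_sub_pow {ι : Type*} {s : Finset ι} {b : ι → ℕ}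
    (hb : Set.InjOn b s) (hb1 : ∀ i ∈ s, 1 ≤ b i) {q : ℝ} (hq0 : 0 ≤ q) (hq1 : q < 1) :
    Real.exp (-((1 - q) ^ 2)⁻¹) ≤ ∏ i ∈ s, (1 - q ^ b i) := by
  have hsum : ∑ i ∈ s, q ^ b i ≤ (1 - q)⁻¹ := by
    rw [← sum_image hb, ← tsum_geometric_of_lt_one hq0 hq1]
    exact (summable_geometric_of_lt_one hq0 hq1).sum_le_tsum _ fun i _ => by positivity
  calc Real.exp (-((1 - q) ^ 2)⁻¹) ≤ Real.exp (∑ i ∈ s, -(q ^ b i / (1 - q))) := by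
        rw [Real.exp_le_exp, sum_neg_distrib, ← sum_div, neg_le_neg_iff, sq, mul_inv]
        exact div_le_div_of_nonneg_right hsum (by linarith)
    _ = ∏ i ∈ s, Real.exp (-(q ^ b i / (1 - q))) := Real.exp_sum _ _
    _ ≤ ∏ i ∈ s, (1 - q ^ b i) := prod_le_prod (fun _ _ => (Real.exp_pos _).le) fun i hi =>
        Real.exp_neg_div_le_one_sub (by positivity)
          (pow_le_of_le_one hq0 hq1.le (Nat.one_le_iff_ne_zero.1 (hb1 i hi))) hq1

section Probability

open ProbabilityTheory Filter Function

variable {Ω : Type*} [MeasurableSpace Ω] {P : Measure Ω}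

lemma ProbabilityTheory.iIndepFun.iIndepSet_biInter_preimage {ι κ β : Type*} [MeasurableSpace β]
    {Z : ι → Ω → β} (hZ : ∀ i, Measurable (Z i)) (hindep : iIndepFun Z P) {B : κ → Finset ι}
    (hB : Pairwise (Disjoint on B)) {A : κ → ι → Set β} (hA : ∀ k i, MeasurableSet (A k i)) :
    iIndepSet (fun k => ⋂ i ∈ B k, Z i ⁻¹' A k i) P := by
  classical
  -- By disjointness, `A k i` for `i ∈ B k` is a function `A' i` of `i` alone.
  set A' : ι → Set β := fun i => if h : ∃ k, i ∈ B k then A h.choose i else Set.univ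
  have hA'A : ∀ k, ∀ i ∈ B k, A' i = A k i := fun k i hi => by
    have h : ∃ k, i ∈ B k := ⟨k, hi⟩
    have hk : h.choose = k := by_contra fun hne => disjoint_left.1 (hB hne) h.choose_spec hi
    simp only [A', dif_pos h, hk]
  have hA' : ∀ i, MeasurableSet (A' i) := fun i => by
    simp only [A']
    split_ifs
    exacts [hA _ _, MeasurableSet.univ]
  have hF : (fun k => ⋂ i ∈ B k, Z i ⁻¹' A k i) = fun k => ⋂ i ∈ B k, Z i ⁻¹' A' i :=
    funext fun k => Set.iInter₂_congr fun i hi => by rw [hA'A k i hi]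
  rw [hF, iIndepSet_iff_meas_biInter fun k => measurableSet_biInter _ fun i _ => hZ i (hA' i)]
  intro K
  rw [← set_biInter_biUnion, hindep.meas_biInter fun i _ => ⟨A' i, hA' i, rfl⟩,
    prod_biUnion (hB.set_pairwise _)]
  exact prod_congr rfl fun k _ => (hindep.meas_biInter fun i _ => ⟨A' i, hA' i, rfl⟩).symm

lemma ProbabilityTheory.ae_frequently_mem_of_iIndepSet {s : ℕ → Set Ω}
    (hs : ∀ n, MeasurableSet (s n)) (hind : iIndepSet s P) (hsum : ∑' n, P (s n) = ⊤) :
    ∀ᵐ ω ∂P, ∃ᶠ n in atTop, ω ∈ s n := by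
  have := hind.isProbabilityMeasure
  have hlimsup :=
    (ae_mem_iff_measure_eq (MeasurableSet.measurableSet_limsup hs).nullMeasurableSet).2
      (by rw [measure_limsup_eq_one hs hind hsum, measure_univ])
  filter_upwards [hlimsup] with ω hω using mem_limsup_iff_frequently_mem.1 hω

variable {q : ℝ}

section GeometricLaw

variable {X : Ω → ℕ} (hX : Measurable X)
  (hgeom : ∀ k, 1 ≤ k → P {ω | X ω = k} = ENNReal.ofReal ((1 - q) * q ^ (k - 1)))
include hX hgeom

lemma ofReal_one_sub_pow_le_measure_le (hq0 : 0 ≤ q) (hq1 : q ≤ 1) (m : ℕ) :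
    ENNReal.ofReal (1 - q ^ m) ≤ P {ω | X ω ≤ m} := by
  calc ENNReal.ofReal (1 - q ^ m) = ∑ k ∈ range m, ENNReal.ofReal ((1 - q) * q ^ k) := by
        rw [← ENNReal.ofReal_sum_of_nonneg fun k _ => mul_nonneg (by linarith) (pow_nonneg hq0 k),
          ← mul_sum, mul_comm, geom_sum_mul_neg]
    _ = P (⋃ k ∈ range m, {ω | X ω = k + 1}) := by
        have hdisj : (range m : Set ℕ).PairwiseDisjoint fun k => {ω | X ω = k + 1} :=
          fun a _ b _ hab => Set.disjoint_left.2 fun ω h1 h2 =>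
            hab (by simp only [Set.mem_ofPred_eq] at h1 h2; omega)
        rw [measure_biUnion_finset hdisj fun k _ => hX (measurableSet_singleton _)]
        exact sum_congr rfl fun k _ => by rw [hgeom (k + 1) (by omega), Nat.add_sub_cancel]
    _ ≤ P {ω | X ω ≤ m} := measure_mono fun ω hω => by
        simp only [Set.mem_iUnion, Set.mem_ofPred_eq, mem_range] at hω ⊢
        obtain ⟨k, hk, hXk⟩ := hω
        omega

lemma measure_lt_le_ofReal_pow [IsProbabilityMeasure P] (hq0 : 0 ≤ q) (hq1 : q ≤ 1) (m : ℕ) :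
    P {ω | m < X ω} ≤ ENNReal.ofReal (q ^ m) := by
  have hcompl : {ω | m < X ω} = {ω | X ω ≤ m}ᶜ := by ext; simp
  have hms : MeasurableSet {ω | X ω ≤ m} := hX measurableSet_Iic
  rw [hcompl, prob_compl_eq_one_sub hms, tsub_le_iff_right,
    ← ENNReal.ofReal_one, ← add_sub_cancel (q ^ m) 1,
    ENNReal.ofReal_add (by positivity) (sub_nonneg.2 (pow_le_one₀ hq0 hq1))]
  exact add_le_add_right (ofReal_one_sub_pow_le_measure_le hX hgeom hq0 hq1 m) _

end GeometricLaw

variable {Z : ℕ → Ω → ℕ} (hq0 : 0 ≤ q) (hq1 : q < 1)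
  (hmeas : ∀ i, Measurable (Z i))
  (hgeom : ∀ i k, 1 ≤ k → P {ω | Z i ω = k} = ENNReal.ofReal ((1 - q) * q ^ (k - 1)))
include hq0 hq1 hmeas hgeom

lemma ae_eventually_le_self [IsProbabilityMeasure P] :
    ∀ᵐ ω ∂P, ∀ᶠ i in atTop, Z i ω ≤ i := by
  have hsum : ∑' i, P {ω | i < Z i ω} ≠ ⊤ := by
    refine ne_top_of_le_ne_top ?_ (ENNReal.tsum_le_tsum fun i =>
      measure_lt_le_ofReal_pow (hmeas i) (hgeom i) hq0 hq1.le i)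
    rw [← ENNReal.ofReal_tsum_of_nonneg (fun i => by positivity)
      (summable_geometric_of_lt_one hq0 hq1)]
    exact ENNReal.ofReal_ne_top
  filter_upwards [ae_eventually_notMem hsum] with ω hω
  simpa using hω

/-- Second Borel–Cantelli: the events for distinct `k` involve disjoint sets of the `Z i`, so
they are independent, and each has probability at least `exp (-((1 - q) ^ 2)⁻¹)`. -/
lemma ae_frequently_dyadic_block (hindep : iIndepFun Z P) :
    ∀ᵐ ω ∂P, ∃ᶠ k in atTop, ∀ i ∈ Ioc (2 ^ k) (2 ^ (k + 1)), Z i ω ≤ 2 ^ (k + 1) + 1 - i := by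
  set E : ℕ → Set Ω := fun k => ⋂ i ∈ Ioc (2 ^ k) (2 ^ (k + 1)),
    Z i ⁻¹' Set.Iic (2 ^ (k + 1) + 1 - i)
  have hE : ∀ k, MeasurableSet (E k) := fun k =>
    measurableSet_biInter _ fun i _ => hmeas i measurableSet_Iic
  have hdisj : Pairwise (Disjoint on fun k => Ioc (2 ^ k) (2 ^ (k + 1))) := fun k l hkl => by
    rw [onFun, ← disjoint_coe, coe_Ioc, coe_Ioc]
    exact (pow_right_mono₀ (one_le_two : (1 : ℕ) ≤ 2)).pairwise_disjoint_on_Ioc_succ hkl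
  have hlow : ∀ k, ENNReal.ofReal (Real.exp (-((1 - q) ^ 2)⁻¹)) ≤ P (E k) := fun k => by
    rw [hindep.meas_biInter fun i _ => ⟨_, measurableSet_Iic, rfl⟩]
    calc ENNReal.ofReal (Real.exp (-((1 - q) ^ 2)⁻¹))
        ≤ ENNReal.ofReal (∏ i ∈ Ioc (2 ^ k) (2 ^ (k + 1)), (1 - q ^ (2 ^ (k + 1) + 1 - i))) :=
          ENNReal.ofReal_le_ofReal <| Real.exp_neg_le_prod_one_sub_pow
            (fun i hi j hj hij => by simp only [coe_Ioc, Set.mem_Ioc] at hi hj; omega)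
            (fun i hi => by simp only [mem_Ioc] at hi; omega) hq0 hq1
      _ = ∏ i ∈ Ioc (2 ^ k) (2 ^ (k + 1)), ENNReal.ofReal (1 - q ^ (2 ^ (k + 1) + 1 - i)) :=
          ENNReal.ofReal_prod_of_nonneg fun _ _ => sub_nonneg.2 (pow_le_one₀ hq0 hq1.le)
      _ ≤ _ := prod_le_prod' fun i _ =>
          ofReal_one_sub_pow_le_measure_le (hmeas i) (hgeom i) hq0 hq1.le _
  have hsum : ∑' k, P (E k) = ⊤ := top_unique <|
    (ENNReal.tsum_const_eq_top_of_ne_zero (by simpa using Real.exp_pos _)).symm.le.trans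
      (ENNReal.tsum_le_tsum hlow)
  filter_upwards [ae_frequently_mem_of_iIndepSet hE
    (hindep.iIndepSet_biInter_preimage hmeas hdisj fun _ _ => measurableSet_Iic) hsum] with ω hω
  simpa [E] using hω

lemma ae_infinite_setOf_isRegenPoint [IsProbabilityMeasure P] (hindep : iIndepFun Z P) :
    ∀ᵐ ω ∂P, {T | IsRegenPoint (insertProc fun i => Z i ω) T}.Infinite := by
  filter_upwards [ae_eventually_le_self hq0 hq1 hmeas hgeom,
    ae_frequently_dyadic_block hq0 hq1 hmeas hgeom hindep] with ω hev hfreq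
  exact infinite_setOf_isRegenPoint_insertProc hev hfreq

end Probability

theorem lds_regenerative_sandwich_general
    {Ω : Type*} [MeasurableSpace Ω] (P : Measure Ω) [IsProbabilityMeasure P]
    (q : ℝ) (hq0 : 0 < q) (hq1 : q < 1)
    (Z : ℕ → Ω → ℕ)
    (hmeas : ∀ i, Measurable (Z i))
    (hindep : ProbabilityTheory.iIndepFun Z P)
    (hgeom : ∀ i k, 1 ≤ k →
      P {ω | Z i ω = k} = ENNReal.ofReal ((1 - q) * q ^ (k - 1))) :
    ∀ᵐ ω ∂P, ∀ n : ℕ, 1 ≤ n →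
      (Finset.Icc 1 (Sn (fun i => Z i ω) n - 1)).sup (blockYDown (fun i => Z i ω))
          ≤ mallowsLnDown (fun i => Z i ω) n
        ∧ mallowsLnDown (fun i => Z i ω) n
          ≤ (Finset.Icc 1 (Sn (fun i => Z i ω) n)).sup (blockYDown (fun i => Z i ω)) := by
  filter_upwards [ae_infinite_setOf_isRegenPoint hq0.le hq1 hmeas hgeom hindep] with ω hR n _
  exact mallowsLnDown_sandwich hR n

/-- **Sandwiching the LDS by block LDS's.** For the infinite Mallows(q) process, almost
surely, for every `n ≥ 1`:
`max_{1 ≤ i ≤ S_n - 1} Y_i^↓ ≤ L^↓(Π_n) ≤ max_{1 ≤ i ≤ S_n} Y_i^↓`. -/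
theorem lds_regenerative_sandwich
    {Ω : Type*} [MeasurableSpace Ω] (P : Measure Ω) [IsProbabilityMeasure P]
    (q : ℝ) (hq0 : 0 < q) (hq1 : q < 1)
    (Z : ℕ → Ω → ℕ)
    (hmeas : ∀ i, Measurable (Z i))
    (hindep : ProbabilityTheory.iIndepFun Z P)
    (hpos : ∀ i ω, 1 ≤ Z i ω)
    (hgeom : ∀ i k, 1 ≤ k →
      P {ω | Z i ω = k} = ENNReal.ofReal ((1 - q) * q ^ (k - 1))) :
    ∀ᵐ ω ∂P, ∀ n : ℕ, 1 ≤ n →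
      (Finset.Icc 1 (Sn (fun i => Z i ω) n - 1)).sup (blockYDown (fun i => Z i ω))
          ≤ mallowsLnDown (fun i => Z i ω) n
        ∧ mallowsLnDown (fun i => Z i ω) n
          ≤ (Finset.Icc 1 (Sn (fun i => Z i ω) n)).sup (blockYDown (fun i => Z i ω)) :=
  lds_regenerative_sandwich_general P q hq0 hq1 Z hmeas hindep hgeom

end
end

section
/- Fix 0 < q < 1. Define Z(q) = 1 + Σ_{j=1}^∞ q^j / ∏_{k=1}^j (1 - q^k) and μ_j = Z(q)^{-1} · q^j / ∏_{k=1}^j (1 - q^k) for j ≥ 0. Then Z(q) < ∞, the μ_j are nonnegative with Σ_{j=0}^∞ μ_j = 1, and μ is a stationary distribution for the transition matrix P on ℕ ∪ {0} given by P_{i,j} = (1-q)q^j for j ≥ i ≥ 0, P_{i,i-1} = 1 - q^i for i ≥ 1, and P_{i,j} = 0 otherwise; that is, for every j ≥ 0, Σ_{i=0}^∞ μ_i P_{i,j} = μ_j. -/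
noncomputable section

/-- `Z(q) = 1 + ∑_{j=1}^∞ q^j / ∏_{k=1}^j (1 - q^k)`. -/
noncomputable def mallowsChainZ (q : ℝ) : ℝ :=
  1 + ∑' j : ℕ, q ^ (j + 1) / ∏ k ∈ Finset.Icc 1 (j + 1), (1 - q ^ k)

/-- The putative stationary distribution `μ_j = Z(q)⁻¹ q^j / ∏_{k=1}^j (1 - q^k)`. -/
noncomputable def mallowsChainMu (q : ℝ) (j : ℕ) : ℝ :=
  (mallowsChainZ q)⁻¹ * (q ^ j / ∏ k ∈ Finset.Icc 1 j, (1 - q ^ k))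

/-- The transition matrix of the chain `M_n = max(M_{n-1}, Z_n) - 1`:
`P_{i,j} = (1-q) q^j` for `j ≥ i ≥ 0`, `P_{i,i-1} = 1 - q^i` for `i ≥ 1`, else `0`. -/
noncomputable def mallowsChainP (q : ℝ) (i j : ℕ) : ℝ :=
  if i ≤ j then (1 - q) * q ^ j
  else if j + 1 = i then 1 - q ^ i
  else 0

namespace MallowsAux

open Filter Topology

noncomputable def a (q : ℝ) (j : ℕ) : ℝ := q ^ j / ∏ k ∈ Finset.Icc 1 j, (1 - q ^ k)

variable {q : ℝ}

lemma prod_pos (hq0 : 0 < q) (hq1 : q < 1) (j : ℕ) :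
    0 < ∏ k ∈ Finset.Icc 1 j, (1 - q ^ k) := by
  refine Finset.prod_pos fun k hk => ?_
  have hk1 : 1 ≤ k := (Finset.mem_Icc.mp hk).1
  have : q ^ k < 1 := pow_lt_one₀ hq0.le hq1 (by omega)
  linarith

lemma a_pos (hq0 : 0 < q) (hq1 : q < 1) (j : ℕ) : 0 < a q j :=
  div_pos (pow_pos hq0 j) (prod_pos hq0 hq1 j)

lemma a_zero : a q 0 = 1 := by simp [a]

lemma a_succ (hq0 : 0 < q) (hq1 : q < 1) (j : ℕ) :
    a q (j + 1) = a q j * (q / (1 - q ^ (j + 1))) := by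
  have hpow : q ^ (j + 1) < 1 := pow_lt_one₀ hq0.le hq1 (by omega)
  have h1 : (1 : ℝ) - q ^ (j + 1) ≠ 0 := by linarith
  have h2 : (∏ k ∈ Finset.Icc 1 j, (1 - q ^ k)) ≠ 0 := (prod_pos hq0 hq1 j).ne'
  rw [a, a, Finset.prod_Icc_succ_top (Nat.le_add_left 1 j)]
  rw [pow_succ]
  field_simp

lemma sum_a (hq0 : 0 < q) (hq1 : q < 1) (j : ℕ) :
    ∑ i ∈ Finset.range (j + 1), a q i = a q j / q ^ j := by
  induction j with
  | zero => simp [a]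
  | succ n ih =>
    rw [Finset.sum_range_succ, ih, a_succ hq0 hq1]
    have hpow : q ^ (n + 1) < 1 := pow_lt_one₀ hq0.le hq1 (by omega)
    have h1 : (1 : ℝ) - q ^ (n + 1) ≠ 0 := by linarith
    have hq : q ≠ 0 := hq0.ne'
    rw [pow_succ] at *
    field_simp
    ring

lemma summable_a (hq0 : 0 < q) (hq1 : q < 1) : Summable (a q) := by
  have hr : (1 + q) / 2 < 1 := by linarith
  apply summable_of_ratio_norm_eventually_le hr
  have htend : Tendsto (fun n : ℕ => q ^ (n + 1)) atTop (𝓝 0) := by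
    have := tendsto_pow_atTop_nhds_zero_of_lt_one hq0.le hq1
    exact this.comp (tendsto_add_atTop_nat 1)
  have hev : ∀ᶠ n in atTop, q ^ (n + 1) < (1 - q) / 2 :=
    htend.eventually_lt_const (by linarith)
  filter_upwards [hev] with n hn
  have hpow : q ^ (n + 1) < 1 := pow_lt_one₀ hq0.le hq1 (by omega)
  have h1 : (0 : ℝ) < 1 - q ^ (n + 1) := by linarith
  have han : 0 < a q n := a_pos hq0 hq1 n
  have han1 : 0 < a q (n + 1) := a_pos hq0 hq1 (n + 1)
  rw [Real.norm_of_nonneg han1.le, Real.norm_of_nonneg han.le, a_succ hq0 hq1]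
  rw [mul_comm ((1 + q) / 2) (a q n)]
  apply mul_le_mul_of_nonneg_left _ han.le
  rw [div_le_iff₀ h1]
  nlinarith [pow_pos hq0 (n + 1)]

lemma Z_eq (hq0 : 0 < q) (hq1 : q < 1) : mallowsChainZ q = ∑' j, a q j := by
  rw [Summable.tsum_eq_zero_add (summable_a hq0 hq1), a_zero]
  rfl

lemma Z_pos (hq0 : 0 < q) (hq1 : q < 1) : 0 < mallowsChainZ q := by
  have h : 0 ≤ ∑' j : ℕ, q ^ (j + 1) / ∏ k ∈ Finset.Icc 1 (j + 1), (1 - q ^ k) :=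
    tsum_nonneg fun j => (a_pos hq0 hq1 (j + 1)).le
  unfold mallowsChainZ
  linarith

lemma mu_eq (j : ℕ) : mallowsChainMu q j = (mallowsChainZ q)⁻¹ * a q j := rfl

end MallowsAux

open MallowsAux in
/-- **Stationary distribution of the Mallows Markov chain.** For `0 < q < 1`:
the series defining `Z(q)` converges (i.e. `Z(q) < ∞`), the `μ_j` are nonnegative and
sum to `1`, and `μ` is stationary for the transition matrix: `∑_i μ_i P_{i,j} = μ_j`
for all `j ≥ 0`. -/
theorem mallows_chain_stationary (q : ℝ) (hq0 : 0 < q) (hq1 : q < 1) :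
    Summable (fun j : ℕ => q ^ (j + 1) / ∏ k ∈ Finset.Icc 1 (j + 1), (1 - q ^ k))
      ∧ (∀ j : ℕ, 0 ≤ mallowsChainMu q j)
      ∧ (∑' j : ℕ, mallowsChainMu q j) = 1
      ∧ ∀ j : ℕ, (∑' i : ℕ, mallowsChainMu q i * mallowsChainP q i j)
          = mallowsChainMu q j := by
  have hZpos := Z_pos hq0 hq1
  have hZinv : 0 ≤ (mallowsChainZ q)⁻¹ := inv_nonneg.mpr hZpos.le
  refine ⟨?_, ?_, ?_, ?_⟩
  · have h1 : Summable (fun n : ℕ => a q (n + 1)) :=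
      (summable_nat_add_iff (f := a q) 1).2 (summable_a hq0 hq1)
    exact h1
  · intro j
    rw [mu_eq]
    exact mul_nonneg hZinv (a_pos hq0 hq1 j).le
  · have : (fun j => mallowsChainMu q j) = fun j => (mallowsChainZ q)⁻¹ * a q j := rfl
    rw [this, tsum_mul_left, ← Z_eq hq0 hq1]
    exact inv_mul_cancel₀ hZpos.ne'
  · intro j
    have hsupp : ∀ i ∉ Finset.range (j + 2),
        mallowsChainMu q i * mallowsChainP q i j = 0 := by
      intro i hi
      simp only [Finset.mem_range, not_lt] at hi
      have h1 : ¬ i ≤ j := by omega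
      have h2 : ¬ (j + 1 = i) := by omega
      simp [mallowsChainP, h1, h2]
    rw [tsum_eq_sum hsupp, Finset.sum_range_succ]
    have hP : ∀ i ∈ Finset.range (j + 1), mallowsChainP q i j = (1 - q) * q ^ j := by
      intro i hi
      simp [mallowsChainP, Nat.lt_succ_iff.mp (Finset.mem_range.mp hi)]
    have hPj : mallowsChainP q (j + 1) j = 1 - q ^ (j + 1) := by
      simp [mallowsChainP]
    have step1 : ∑ i ∈ Finset.range (j + 1), mallowsChainMu q i * mallowsChainP q i j
        = ((mallowsChainZ q)⁻¹ * ((1 - q) * q ^ j)) * (a q j / q ^ j) := by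
      rw [← sum_a hq0 hq1 j, Finset.mul_sum]
      refine Finset.sum_congr rfl fun i hi => ?_
      rw [mu_eq, hP i hi]
      ring
    rw [step1, hPj, mu_eq, mu_eq, a_succ hq0 hq1 j]
    have hqj : (q : ℝ) ^ j ≠ 0 := (pow_pos hq0 j).ne'
    have hpow : q ^ (j + 1) < 1 := pow_lt_one₀ hq0.le hq1 (by omega)
    have h1 : (1 : ℝ) - q ^ (j + 1) ≠ 0 := by linarith
    field_simp
    ring

end
end

section
/- For every real q with 0 < q < 1, the identity 1 + Σ_{j=1}^∞ q^j / ∏_{k=1}^j (1 - q^k) = ∏_{k=1}^∞ (1 - q^k)^{-1} holds (both sides being finite). -/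
/-!
Writing `P N = ∏_{k<N} (1 - q^(k+1))`, each term of the series is a difference of
reciprocals, `q^(j+1) / P (j+1) = 1 / P (j+1) - 1 / P j`, so the partial sums telescope:
`1 + ∑_{j<N} q^(j+1) / P (j+1) = 1 / P N`. For `‖q‖ < 1` the Euler product converges to a
nonzero limit, because `∑ ‖q^(k+1)‖` converges and no factor vanishes; hence `1 / P N`
converges to its reciprocal. For real `0 < q < 1` the terms are nonnegative, so convergence
of the partial sums already gives summability.
-/

open Finset Filter Topology

theorem Finset.prod_Icc_one_eq_prod_range {M : Type*} [CommMonoid M] (f : ℕ → M) (n : ℕ) :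
    ∏ k ∈ Icc 1 n, f k = ∏ k ∈ range n, f (k + 1) := by
  rw [← Ico_add_one_right_eq_Icc, prod_Ico_eq_prod_range, Nat.add_sub_cancel]
  simp only [add_comm 1]

section Field

variable {K : Type*} [Field K] {q : K}

theorem one_add_sum_pow_div_prod_one_sub_pow (hq : ∀ k : ℕ, q ^ (k + 1) ≠ 1) (N : ℕ) :
    1 + ∑ j ∈ range N, q ^ (j + 1) / ∏ k ∈ range (j + 1), (1 - q ^ (k + 1))
      = (∏ k ∈ range N, (1 - q ^ (k + 1)))⁻¹ := by
  set P : ℕ → K := fun n => ∏ k ∈ range n, (1 - q ^ (k + 1))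
  have hP : ∀ n, P n ≠ 0 := fun n =>
    prod_ne_zero_iff.2 fun k _ => sub_ne_zero.2 (hq k).symm
  have hterm : ∀ j, q ^ (j + 1) / P (j + 1) = (P (j + 1))⁻¹ - (P j)⁻¹ := by
    intro j
    have hsucc : P (j + 1) = P j * (1 - q ^ (j + 1)) := prod_range_succ _ _
    have hfac : 1 - q ^ (j + 1) ≠ 0 := sub_ne_zero.2 (hq j).symm
    rw [hsucc]
    field_simp [hP j]
    ring
  simp only [hterm, sum_range_sub (fun n => (P n)⁻¹), P, prod_range_zero, inv_one]
  ring

end Field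

section NormedField

variable {K : Type*} [NormedField K] {q : K}

theorem pow_succ_ne_one_of_norm_lt_one (hq : ‖q‖ < 1) (k : ℕ) : q ^ (k + 1) ≠ 1 := by
  intro h
  have : ‖q‖ ^ (k + 1) < 1 := pow_lt_one₀ (norm_nonneg q) hq (Nat.succ_ne_zero k)
  simp [← norm_pow, h] at this

theorem summable_norm_pow_succ (hq : ‖q‖ < 1) : Summable fun k : ℕ => ‖q ^ (k + 1)‖ := by
  simpa only [norm_pow] using
    (summable_nat_add_iff 1).2 (summable_geometric_of_lt_one (norm_nonneg q) hq)

variable [CompleteSpace K]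

theorem multipliable_one_sub_pow_succ (hq : ‖q‖ < 1) :
    Multipliable fun k : ℕ => 1 - q ^ (k + 1) := by
  simpa only [sub_eq_add_neg] using
    multipliable_one_add_of_summable (by simpa only [norm_neg] using summable_norm_pow_succ hq)

theorem tprod_one_sub_pow_succ_ne_zero (hq : ‖q‖ < 1) : ∏' k : ℕ, (1 - q ^ (k + 1)) ≠ 0 := by
  simpa only [sub_eq_add_neg] using
    tprod_one_add_ne_zero_of_summable (f := fun k : ℕ => -q ^ (k + 1))
      (fun k => by simpa only [← sub_eq_add_neg] using
        sub_ne_zero.2 (pow_succ_ne_one_of_norm_lt_one hq k).symm)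
      (by simpa only [norm_neg] using summable_norm_pow_succ hq)

theorem tendsto_one_add_sum_pow_div_prod_one_sub_pow (hq : ‖q‖ < 1) :
    Tendsto (fun N => 1 + ∑ j ∈ range N, q ^ (j + 1) / ∏ k ∈ range (j + 1), (1 - q ^ (k + 1)))
      atTop (𝓝 (∏' k : ℕ, (1 - q ^ (k + 1)))⁻¹) := by
  simp only [one_add_sum_pow_div_prod_one_sub_pow (pow_succ_ne_one_of_norm_lt_one hq)]
  exact (multipliable_one_sub_pow_succ hq).hasProd.tendsto_prod_nat.inv₀
    (tprod_one_sub_pow_succ_ne_zero hq)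

end NormedField

theorem Real.hasSum_pow_div_prod_one_sub_pow {q : ℝ} (hq0 : 0 ≤ q) (hq1 : q < 1) :
    HasSum (fun j : ℕ => q ^ (j + 1) / ∏ k ∈ range (j + 1), (1 - q ^ (k + 1)))
      ((∏' k : ℕ, (1 - q ^ (k + 1)))⁻¹ - 1) := by
  have hnorm : ‖q‖ < 1 := by rwa [Real.norm_of_nonneg hq0]
  have hterm_nonneg : ∀ j : ℕ, 0 ≤ q ^ (j + 1) / ∏ k ∈ range (j + 1), (1 - q ^ (k + 1)) :=
    fun j => div_nonneg (pow_nonneg hq0 _) <| prod_nonneg fun k _ =>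
      sub_nonneg.2 (pow_le_one₀ hq0 hq1.le)
  rw [hasSum_iff_tendsto_nat_of_nonneg hterm_nonneg]
  simpa only [add_sub_cancel_left] using
    (tendsto_one_add_sum_pow_div_prod_one_sub_pow hnorm).sub_const 1

/-- **Simplification of the normalizing constant.** For `0 < q < 1`,
`1 + ∑_{j=1}^∞ q^j / ∏_{k=1}^j (1 - q^k) = (∏_{k=1}^∞ (1 - q^k))⁻¹`,
both the series and the infinite product being convergent. -/
theorem zq_eq_inv_euler_prod (q : ℝ) (hq0 : 0 < q) (hq1 : q < 1) :
    Summable (fun j : ℕ => q ^ (j + 1) / ∏ k ∈ Finset.Icc 1 (j + 1), (1 - q ^ k))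
      ∧ Multipliable (fun k : ℕ => 1 - q ^ (k + 1))
      ∧ 1 + (∑' j : ℕ, q ^ (j + 1) / ∏ k ∈ Finset.Icc 1 (j + 1), (1 - q ^ k))
          = (∏' k : ℕ, (1 - q ^ (k + 1)))⁻¹ := by
  have hsum := Real.hasSum_pow_div_prod_one_sub_pow hq0.le hq1
  simp only [prod_Icc_one_eq_prod_range]
  refine ⟨hsum.summable, multipliable_one_sub_pow_succ (by rwa [Real.norm_of_nonneg hq0.le]), ?_⟩
  rw [hsum.tsum_eq, add_sub_cancel]
end
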